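/- arXiv:1901.10160 — 4 statements merged into one kernel-verified Lean document; each statement's English description precedes it below -/
import Mathlib

section
/- Let f : A^G → A be uniformly continuous (A^G with the prodiscrete uniformity, A discrete). Then the map T : A^G → A^G defined by T(x)(g) = f(g⁻¹·x) is a cellular automaton; moreover there exists a finite set S ⊆ G such that whenever x|_S = y|_S one has f(x) = f(y). -/
open scoped Uniformity Classical


/-- The shift action of `G` on `A^G`: `(g · x)(h) = x (g⁻¹ h)`. -/
def shift {G A : Type*} [Group G] (g : G) (x : G → A) : G → A :=
  fun h => x (g⁻¹ * h)

/-- A cellular automaton over `G` with alphabet `A`: there is a finite memory set `S`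
and a local rule `μ : A^S → A` with `T x g = μ ((g⁻¹ · x)|_S)`. -/
def IsCellularAutomaton {G A : Type*} [Group G] (T : (G → A) → (G → A)) : Prop :=
  ∃ S : Finset G, ∃ μ : (S → A) → A,
    ∀ (x : G → A) (g : G), T x g = μ (fun s => shift g⁻¹ x s.1)

theorem stmt3 {G A : Type*} [Group G] [Nonempty A]
    (f : (G → A) → A)
    (hf : letI : UniformSpace A := ⊥; UniformContinuous f) :
    IsCellularAutomaton (fun (x : G → A) (g : G) => f (shift g⁻¹ x)) ∧
    ∃ S : Finset G, ∀ x y : G → A, (∀ s ∈ S, x s = y s) → f x = f y := by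
  have key : ∃ S : Finset G, ∀ x y : G → A, (∀ s ∈ S, x s = y s) → f x = f y := by
    letI : UniformSpace A := ⊥
    have hid : (SetRel.id : SetRel A A) ∈ 𝓤 A := by
      rw [bot_uniformity]; exact Filter.mem_principal_self _
    have h1 : {p : (G → A) × (G → A) | f p.1 = f p.2} ∈ 𝓤 (G → A) := by
      have := hf hid
      simpa [SetRel.id] using this
    rw [Pi.uniformity] at h1
    rw [Filter.mem_iInf] at h1
    obtain ⟨I, hIfin, V, hV, hInt⟩ := h1
    refine ⟨hIfin.toFinset, fun x y hxy => ?_⟩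
    have hmem : (x, y) ∈ {p : (G → A) × (G → A) | f p.1 = f p.2} := by
      rw [hInt]
      refine Set.mem_iInter.2 fun i => ?_
      have : V i ∈ (𝓤 A).comap fun a : (G → A) × (G → A) => (a.1 i.1, a.2 i.1) := hV i
      rw [bot_uniformity, Filter.mem_comap] at this
      obtain ⟨t, ht, hts⟩ := this
      apply hts
      have : x i.1 = y i.1 := hxy i.1 (hIfin.mem_toFinset.2 i.2)
      show (x ↑i, y ↑i) ∈ t; rw [this]; exact Filter.mem_principal.1 ht rfl
    exact hmem
  obtain ⟨S, hS⟩ := key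
  refine ⟨⟨S, fun u => f (fun h => if hh : h ∈ S then u ⟨h, hh⟩ else Classical.arbitrary A),
    fun x g => ?_⟩, S, hS⟩
  exact hS _ _ (fun s hs => by simp [hs])
end

section
/- The binary operation (f₁ ∗ f₂)(x) = f₁((f₂(g⁻¹·x))_{g∈G}) on the set U(A^G, A) of uniformly continuous functions A^G → A is well-defined (f₁ ∗ f₂ is again uniformly continuous), is associative, and has the projection p₁(x) = x(1) as a two-sided identity, making U(A^G, A) a monoid. -/
open scoped Uniformity Pointwise

/-- The operation `(f₁ ∗ f₂)(x) = f₁ ((f₂ (g⁻¹ · x))_{g ∈ G})`. -/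
def starOp {G A : Type*} [Group G] (f₁ f₂ : (G → A) → A) : (G → A) → A :=
  fun x => f₁ (fun g => f₂ (shift g⁻¹ x))

lemma shift_one {G A : Type*} [Group G] (x : G → A) : shift 1 x = x :=
  funext fun h => by simp [shift]

lemma uc_iff_finset {G A : Type*} (f : (G → A) → A) :
    letI : UniformSpace A := ⊥
    (UniformContinuous f ↔
      ∃ F : Finset G, ∀ x y : G → A, (∀ i ∈ F, x i = y i) → f x = f y) := by
  letI : UniformSpace A := ⊥
  have hbot : 𝓤 A = Filter.principal SetRel.id := rfl
  constructor
  · intro hf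
    have hmem : {p : (G → A) × (G → A) | f p.1 = f p.2} ∈ 𝓤 (G → A) := by
      have := hf (by rw [hbot]; exact Filter.mem_principal_self SetRel.id)
      simpa [SetRel.id] using this
    rw [Pi.uniformity] at hmem
    obtain ⟨I, hIfin, V, hV, -, hUI, -⟩ := Filter.mem_iInf'.1 hmem
    refine ⟨hIfin.toFinset, fun x y hxy => ?_⟩
    have : (x, y) ∈ {p : (G → A) × (G → A) | f p.1 = f p.2} := by
      rw [hUI]
      refine Set.mem_iInter₂.2 fun i hi => ?_
      have hVi := hV i
      rw [Filter.mem_comap] at hVi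
      obtain ⟨t, ht, hts⟩ := hVi
      rw [hbot, Filter.mem_principal] at ht
      exact hts (show (x i, y i) ∈ t from ht (by
        simp only [SetRel.id, Set.mem_setOf_eq]
        exact hxy i (hIfin.mem_toFinset.2 hi)))
    exact this
  · rintro ⟨F, hF⟩
    intro U hU
    rw [hbot, Filter.mem_principal] at hU
    have hmem : {p : (G → A) × (G → A) | ∀ i ∈ F, p.1 i = p.2 i} ∈ 𝓤 (G → A) := by
      have h1 : ∀ i : G, {p : (G → A) × (G → A) | p.1 i = p.2 i} ∈ 𝓤 (G → A) := by
        intro i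
        have h := (Pi.uniformContinuous_proj (fun _ : G => A) i)
          (by rw [hbot]; exact Filter.mem_principal_self SetRel.id)
        simpa [SetRel.id] using h
      exact Filter.mem_of_superset
        ((Filter.biInter_mem F.finite_toSet).2 fun i _ => h1 i)
        (fun p hp i hi => Set.mem_iInter₂.1 hp i hi)
    exact Filter.mem_map.2 (Filter.mem_of_superset hmem fun p hp => hU (hF p.1 p.2 hp))

theorem stmt5 {G A : Type*} [Group G] [Nonempty A] :
    letI : UniformSpace A := ⊥
    (∀ f₁ f₂ : (G → A) → A, UniformContinuous f₁ → UniformContinuous f₂ →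
      UniformContinuous (starOp f₁ f₂)) ∧
    (∀ f₁ f₂ f₃ : (G → A) → A, UniformContinuous f₁ → UniformContinuous f₂ →
      UniformContinuous f₃ → starOp (starOp f₁ f₂) f₃ = starOp f₁ (starOp f₂ f₃)) ∧
    (UniformContinuous (fun x : G → A => x 1)) ∧
    (∀ f : (G → A) → A, UniformContinuous f →
      starOp (fun x : G → A => x 1) f = f ∧ starOp f (fun x : G → A => x 1) = f) := by
  letI : UniformSpace A := ⊥
  classical
  refine ⟨?_, ?_, ?_, ?_⟩
  · intro f₁ f₂ h₁ h₂
    obtain ⟨F₁, hF₁⟩ := (uc_iff_finset f₁).1 h₁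
    obtain ⟨F₂, hF₂⟩ := (uc_iff_finset f₂).1 h₂
    refine (uc_iff_finset _).2 ⟨F₁ * F₂, fun x y hxy => ?_⟩
    refine hF₁ _ _ fun g hg => hF₂ _ _ fun s hs => ?_
    simp only [shift, inv_inv]
    exact hxy _ (Finset.mul_mem_mul hg hs)
  · intro f₁ f₂ f₃ _ _ _
    funext x
    simp only [starOp]
    congr 1; funext g; congr 1; funext k
    show f₃ (shift ((g⁻¹)⁻¹ * k)⁻¹ x) = f₃ (shift k⁻¹ (shift g⁻¹ x))
    congr 1; funext m
    simp [shift, mul_assoc]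
  · exact Pi.uniformContinuous_proj (fun _ : G => A) 1
  · intro f _
    refine ⟨funext fun x => ?_, funext fun x => ?_⟩
    · simp [starOp, shift_one]
    · simp [starOp, shift]
end

section
/- (Curtis–Hedlund) If A is a finite set and T : A^G → A^G is continuous (for the prodiscrete topology) and G-equivariant, then T is a cellular automaton. -/
/-- Curtis–Hedlund: if `A` is finite and `T : A^G → A^G` is continuous (prodiscrete
topology) and `G`-equivariant, then `T` is a cellular automaton. -/
theorem stmt9 {G A : Type*} [Group G] [Finite A] [Nonempty A]
    (T : (G → A) → (G → A))
    (hcont : letI : TopologicalSpace A := ⊥; Continuous T)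
    (hequiv : ∀ (g : G) (x : G → A), T (shift g x) = shift g (T x)) :
    IsCellularAutomaton T := by
  classical
  letI : TopologicalSpace A := ⊥
  haveI : DiscreteTopology A := ⟨rfl⟩
  obtain ⟨a₀⟩ := ‹Nonempty A›
  set f : (G → A) → A := fun x => T x 1 with hf
  have hfc : Continuous f := (continuous_apply (1 : G)).comp hcont
  -- 1. local constancy: each point has a finite window
  have key : ∀ x : G → A, ∃ I : Finset G,
      ∀ z : G → A, (∀ i ∈ I, z i = x i) → f z = f x := by
    intro x
    have hop : IsOpen (f ⁻¹' {f x}) := (isOpen_discrete _).preimage hfc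
    rw [isOpen_pi_iff] at hop
    obtain ⟨I, u, hu, hsub⟩ := hop x rfl
    refine ⟨I, fun z hz => ?_⟩
    have : z ∈ (I : Set G).pi u := by
      intro i hi
      rw [hz i hi]
      exact (hu i hi).2
    exact hsub this
  choose I hI using key
  -- 2. compactness: finitely many windows suffice
  have hcov : (Set.univ : Set (G → A)) ⊆
      ⋃ x : G → A, (I x : Set G).pi (fun i => {x i}) := by
    intro z _
    exact Set.mem_iUnion.2 ⟨z, fun i _ => rfl⟩
  obtain ⟨t, ht⟩ := isCompact_univ.elim_finite_subcover
      (fun x : G → A => (I x : Set G).pi (fun i => {x i}))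
      (fun x => isOpen_set_pi (I x).finite_toSet (fun i _ => isOpen_discrete _)) hcov
  set S : Finset G := t.sup I with hS
  -- 3. f depends only on coordinates in S
  have hdep : ∀ z w : G → A, (∀ s ∈ S, z s = w s) → f z = f w := by
    intro z w h
    obtain ⟨x, hx, hz⟩ := Set.mem_iUnion₂.1 (ht (Set.mem_univ z))
    have hIx : ∀ i ∈ I x, i ∈ S := fun i hi => Finset.mem_sup.2 ⟨x, hx, hi⟩
    have hz' : f z = f x := hI x z (fun i hi => hz i hi)
    have hw' : f w = f x := hI x w (fun i hi => by
      rw [← h i (hIx i hi)]; exact hz i hi)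
    rw [hz', hw']
  refine ⟨S, fun u => f (fun g => if h : g ∈ S then u ⟨g, h⟩ else a₀), fun x g => ?_⟩
  have hxg : T x g = f (shift g⁻¹ x) := by
    have h1 : shift g (shift g⁻¹ x) = x := by
      funext h; simp [shift, mul_assoc]
    have h2 := hequiv g (shift g⁻¹ x)
    rw [h1] at h2
    rw [h2]
    simp [shift, hf]
  rw [hxg]
  exact (hdep _ _ (fun s hs => by rw [dif_pos hs])).symm
end

section
/- (Uniform Curtis–Hedlund) For an arbitrary (possibly infinite) alphabet A, a map T : A^G → A^G is a cellular automaton if and only if T is G-equivariant and uniformly continuous for the prodiscrete uniform structure on A^G. -/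
open scoped Uniformity

lemma mem_unif_pi {G A : Type*} (s : Set ((G → A) × (G → A))) :
    letI : UniformSpace A := ⊥
    (s ∈ 𝓤 (G → A) ↔
      ∃ Ω : Finset G, ∀ x y : G → A, (∀ i ∈ Ω, x i = y i) → (x, y) ∈ s) := by
  letI : UniformSpace A := ⊥
  classical
  rw [Pi.uniformity]
  have huA : (𝓤 A) = Filter.principal SetRel.id := rfl
  simp only [huA, Filter.comap_principal]
  constructor
  · intro hs
    rw [Filter.mem_iInf'] at hs
    obtain ⟨I, hIfin, V, hV, hVuniv, -, hU⟩ := hs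
    refine ⟨hIfin.toFinset, fun x y hxy => ?_⟩
    rw [hU]
    refine Set.mem_iInter.2 fun i => ?_
    by_cases hi : i ∈ I
    · refine hV i ?_
      simp only [Set.mem_preimage, SetRel.id, Set.mem_setOf_eq]
      exact hxy i (hIfin.mem_toFinset.2 hi)
    · rw [hVuniv i hi]; trivial
  · rintro ⟨Ω, hΩ⟩
    have : (⋂ i ∈ (Ω : Set G), (fun p : (G → A) × (G → A) => (p.1 i, p.2 i)) ⁻¹' SetRel.id)
        ∈ ⨅ i, Filter.principal ((fun p : (G → A) × (G → A) => (p.1 i, p.2 i)) ⁻¹' SetRel.id) := by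
      refine (Filter.biInter_mem Ω.finite_toSet).2 fun i _ => ?_
      exact Filter.mem_iInf_of_mem i (Filter.mem_principal_self _)
    refine Filter.mem_of_superset this ?_
    intro p hp
    rcases p with ⟨x, y⟩
    refine hΩ x y fun i hi => ?_
    have := Set.mem_iInter₂.1 hp i hi
    simpa [SetRel.id] using this

/-- Uniform Curtis–Hedlund: for an arbitrary alphabet `A`, `T : A^G → A^G` is a cellular
automaton iff it is `G`-equivariant and uniformly continuous for the prodiscrete
uniform structure. -/
theorem stmt10 {G A : Type*} [Group G] [Nonempty A]
    (T : (G → A) → (G → A)) :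
    IsCellularAutomaton T ↔
      ((∀ (g : G) (x : G → A), T (shift g x) = shift g (T x)) ∧
        (letI : UniformSpace A := ⊥; UniformContinuous T)) := by
  letI : UniformSpace A := ⊥
  classical
  constructor
  · rintro ⟨S, μ, hμ⟩
    have key : ∀ (x : G → A) (g : G), T x g = μ (fun s : S => x (g * s.1)) := by
      intro x g
      rw [hμ]
      congr 1
      funext s
      simp [shift]
    constructor
    · intro g x
      funext h
      simp only [shift]
      rw [key, key]
      congr 1
      funext s
      simp [shift, mul_assoc]
    · rw [UniformContinuous]
      rw [Filter.tendsto_iff_comap, Filter.le_def]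
      intro u hu
      rw [Filter.mem_comap] at hu
      obtain ⟨t, ht, hsub⟩ := hu
      obtain ⟨Ω, hΩ⟩ := (mem_unif_pi t).1 ht
      refine Filter.mem_of_superset ((mem_unif_pi u).2
        ⟨Ω.biUnion (fun g => S.image (g * ·)), fun x y hxy => ?_⟩) subset_rfl
      apply hsub
      simp only [Set.mem_preimage, Prod.map]
      refine hΩ (T x) (T y) fun g hg => ?_
      rw [key, key]
      congr 1
      funext s
      exact hxy (g * s.1) (Finset.mem_biUnion.2 ⟨g, hg, Finset.mem_image.2 ⟨s.1, s.2, rfl⟩⟩)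
  · rintro ⟨hequiv, hUC⟩
    have h1 : {p : (G → A) × (G → A) | p.1 1 = p.2 1} ∈ 𝓤 (G → A) :=
      (mem_unif_pi _).2 ⟨{1}, fun x y hxy => hxy 1 (Finset.mem_singleton_self 1)⟩
    have h2 := hUC h1
    rw [Filter.mem_map] at h2
    obtain ⟨Ω, hΩ⟩ := (mem_unif_pi _).1 h2
    refine ⟨Ω, fun u => T (fun g => if hg : g ∈ Ω then u ⟨g, hg⟩ else Classical.arbitrary A) 1,
      fun x g => ?_⟩
    have e1 : T x g = T (shift g⁻¹ x) 1 := by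
      rw [hequiv g⁻¹ x]
      simp [shift]
    rw [e1]
    exact hΩ (shift g⁻¹ x)
      (fun h => if hg : h ∈ Ω then shift g⁻¹ x h else Classical.arbitrary A)
      (fun i hi => by simp [hi])
end
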